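/- arXiv:1205.6859 — 9 statements merged into one kernel-verified Lean document; each statement's English description precedes it below -/
import Mathlib

section
/- For any countable collection {S_i}_{i=1}^∞ of infinite subsets of ℕ, there exists an infinite subset Q of ℕ (viewed as a strictly increasing sequence {q_k}) such that for every i, the upper density of S_i with respect to Q equals 1, i.e. limsup_{m→∞} #(S_i ∩ {q_1,…,q_m})/m = 1. -/
open Filter

/-- Upper density of `P` with respect to the increasing enumeration of the
infinite set `Q ⊆ ℕ`: `limsup_{m→∞} #(P ∩ {q_1,…,q_m}) / m`. -/
noncomputable def upperDensityWrt (Q P : Set ℕ) : ℝ :=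
  Filter.limsup (fun m : ℕ =>
    ({k | k < m ∧ Nat.nth (· ∈ Q) k ∈ P}.ncard : ℝ) / m) Filter.atTop

/-- Block boundaries. -/
def LL : ℕ → ℕ
  | 0 => 1
  | n + 1 => (n + 1) * LL n + 1

lemma LL_pos (n : ℕ) : 1 ≤ LL n := by
  induction n with
  | zero => simp [LL]
  | succ n ih => simp [LL]

lemma LL_strictMono : StrictMono LL := by
  apply strictMono_nat_of_lt_succ
  intro n
  have := LL_pos n
  simp [LL]
  nlinarith

lemma lt_LL (n : ℕ) : n < LL n := by
  induction n with
  | zero => simp [LL]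
  | succ n ih =>
    have := LL_pos n
    simp [LL]; nlinarith

/-- The stage containing index `k`. -/
def stg (k : ℕ) : ℕ := Nat.findGreatest (fun n => LL n ≤ k) k

lemma stg_eq {n k : ℕ} (h1 : LL n ≤ k) (h2 : k < LL (n + 1)) : stg k = n := by
  have hnk : n ≤ k := le_trans (le_of_lt (lt_LL n)) h1
  have hle : n ≤ stg k := Nat.le_findGreatest hnk h1
  have hge : stg k ≤ n := by
    by_contra hc
    push_neg at hc
    have hs : LL (stg k) ≤ k := Nat.findGreatest_spec (P := fun n => LL n ≤ k) hnk h1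
    have : LL (n + 1) ≤ LL (stg k) := LL_strictMono.monotone hc
    omega
  omega

/-- Index of the set being targeted at stage containing `k`. -/
def eI (k : ℕ) : ℕ := (Nat.unpair (stg k)).1

/-- The enumeration of `Q`. -/
noncomputable def qq (S : ℕ → Set ℕ) : ℕ → ℕ
  | 0 => 0
  | k + 1 => Nat.nth (· ∈ S (eI (k + 1))) (qq S k + 1)

lemma nth_range_strictMono {q : ℕ → ℕ} (hq : StrictMono q) (k : ℕ) :
    Nat.nth (· ∈ Set.range q) k = q k := by
  classical
  have hmem : (· ∈ Set.range q) (q k) := Set.mem_range_self k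
  have hcount : Nat.count (· ∈ Set.range q) (q k) = k := by
    rw [Nat.count_eq_card_filter_range]
    have : (Finset.range (q k)).filter (· ∈ Set.range q) = (Finset.range k).image q := by
      ext m
      simp only [Finset.mem_filter, Finset.mem_range, Set.mem_range, Finset.mem_image]
      constructor
      · rintro ⟨hm, j, rfl⟩
        exact ⟨j, hq.lt_iff_lt.mp hm, rfl⟩
      · rintro ⟨j, hj, rfl⟩
        exact ⟨hq hj, j, rfl⟩
    rw [this, Finset.card_image_of_injective _ hq.injective, Finset.card_range]
  have := Nat.nth_count hmem
  rwa [hcount] at this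

/-- For any countable collection of infinite subsets of `ℕ` there is an infinite
set `Q` along which every `S i` has upper density `1`. -/
theorem stmt0 (S : ℕ → Set ℕ) (hS : ∀ i, (S i).Infinite) :
    ∃ Q : Set ℕ, Q.Infinite ∧ ∀ i, upperDensityWrt Q (S i) = 1 := by
  classical
  set q := qq S with hqdef
  have hSinf : ∀ i, {x | x ∈ S i}.Infinite := fun i => hS i
  -- q is strictly monotone
  have hq : StrictMono q := by
    apply strictMono_nat_of_lt_succ
    intro k
    have : q k + 1 ≤ Nat.nth (· ∈ S (eI (k + 1))) (q k + 1) :=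
      Nat.le_nth (fun hf => absurd hf (hSinf _))
    calc q k < q k + 1 := Nat.lt_succ_self _
      _ ≤ Nat.nth (· ∈ S (eI (k + 1))) (q k + 1) := this
      _ = q (k + 1) := rfl
  have hqmem : ∀ k : ℕ, q (k + 1) ∈ S (eI (k + 1)) := fun k =>
    Nat.nth_mem_of_infinite (hSinf _) _
  refine ⟨Set.range q, Set.infinite_range_of_injective hq.injective, fun i => ?_⟩
  have hnth : ∀ k, Nat.nth (· ∈ Set.range q) k = q k := nth_range_strictMono hq
  set a : ℕ → ℝ := fun m => ({k | k < m ∧ Nat.nth (· ∈ Set.range q) k ∈ S i}.ncard : ℝ) / m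
    with ha
  have hsetfin : ∀ m : ℕ, {k | k < m ∧ Nat.nth (· ∈ Set.range q) k ∈ S i}.Finite := by
    intro m
    exact (Set.finite_Iio m).subset (fun x hx => hx.1)
  -- upper bound: a m ≤ 1
  have haub : ∀ m : ℕ, a m ≤ 1 := by
    intro m
    rcases Nat.eq_zero_or_pos m with rfl | hm
    · simp [ha]
    · have hcard : {k | k < m ∧ Nat.nth (· ∈ Set.range q) k ∈ S i}.ncard ≤ m := by
        have h1 : {k | k < m ∧ Nat.nth (· ∈ Set.range q) k ∈ S i} ⊆ Set.Iio m :=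
          fun x hx => hx.1
        calc _ ≤ (Set.Iio m).ncard := Set.ncard_le_ncard h1 (Set.finite_Iio m)
          _ = m := by simp [Set.ncard_eq_toFinset_card', Set.toFinset_Iio]
      rw [ha]
      rw [div_le_one (by exact_mod_cast hm)]
      exact_mod_cast hcard
  have halb : ∀ m : ℕ, 0 ≤ a m := by
    intro m
    apply div_nonneg (by positivity) (by positivity)
  -- key: blocks give large ratio
  have hkey : ∀ n : ℕ, (Nat.unpair n).1 = i →
      (n : ℝ) / (n + 1) ≤ a (LL (n + 1)) := by
    intro n hn
    set m := LL (n + 1) with hm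
    have hLn1 : 1 ≤ LL n := LL_pos n
    have hmL : m = (n + 1) * LL n + 1 := rfl
    -- all indices in [LL n, m) are in the set
    have hsub : Set.Ico (LL n) m ⊆ {k | k < m ∧ Nat.nth (· ∈ Set.range q) k ∈ S i} := by
      rintro k ⟨hk1, hk2⟩
      refine ⟨hk2, ?_⟩
      rw [hnth]
      obtain ⟨k', rfl⟩ : ∃ k', k = k' + 1 := ⟨k - 1, by omega⟩
      have hstg : stg (k' + 1) = n := stg_eq hk1 hk2
      have : eI (k' + 1) = i := by rw [eI, hstg, hn]
      have h := hqmem k'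
      rwa [this] at h
    have hcard1 : n * LL n + 1 ≤ {k | k < m ∧ Nat.nth (· ∈ Set.range q) k ∈ S i}.ncard := by
      have h1 : (Set.Ico (LL n) m).ncard = m - LL n := by
        simp [Set.ncard_eq_toFinset_card', Set.toFinset_Ico, Nat.card_Ico]
      have h2 := Set.ncard_le_ncard hsub (hsetfin m)
      rw [h1] at h2
      have : m - LL n = n * LL n + 1 := by rw [hmL]; ring_nf; omega
      omega
    rw [ha]
    have hmpos : (0 : ℝ) < m := by
      have : 1 ≤ m := le_trans hLn1 (LL_strictMono.monotone (Nat.le_succ n))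
      exact_mod_cast this
    rw [div_le_div_iff₀ (by positivity) hmpos]
    have hc : ((n : ℝ) * LL n + 1) ≤ ({k | k < m ∧ Nat.nth (· ∈ Set.range q) k ∈ S i}.ncard : ℝ) := by
      exact_mod_cast hcard1
    have hmr : (m : ℝ) = (n + 1) * LL n + 1 := by rw [hmL]; push_cast; ring
    have hLr : (1:ℝ) ≤ LL n := by exact_mod_cast hLn1
    rw [hmr]
    nlinarith [hLr, hc, hmpos]
  -- limsup bounds
  have hbdd : IsBoundedUnder (· ≤ ·) atTop a := isBoundedUnder_of ⟨1, haub⟩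
  have hcobdd : IsCoboundedUnder (· ≤ ·) atTop a :=
    isCoboundedUnder_le_of_le atTop halb
  have h_le : Filter.limsup a atTop ≤ 1 :=
    limsup_le_of_le hcobdd (Eventually.of_forall haub)
  have h_ge : (1 : ℝ) ≤ Filter.limsup a atTop := by
    have hstep : ∀ j : ℕ, (j : ℝ) / (j + 1) ≤ Filter.limsup a atTop := by
      intro j
      apply le_limsup_of_frequently_le _ hbdd
      rw [frequently_atTop]
      intro M
      set n := Nat.pair i (max j M) with hn
      have hun : (Nat.unpair n).1 = i := by simp [hn]
      have hnj : j ≤ n := le_trans (le_max_left j M) (Nat.right_le_pair i (max j M))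
      have hnM : M ≤ n := le_trans (le_max_right j M) (Nat.right_le_pair i (max j M))
      refine ⟨LL (n + 1), ?_, ?_⟩
      · calc M ≤ n := hnM
          _ ≤ n + 1 := Nat.le_succ n
          _ ≤ LL (n + 1) := (lt_LL (n + 1)).le
      · calc (j : ℝ) / (j + 1) ≤ (n : ℝ) / (n + 1) := by
              rw [div_le_div_iff₀ (by positivity) (by positivity)]
              have : (j : ℝ) ≤ n := by exact_mod_cast hnj
              nlinarith
          _ ≤ a (LL (n + 1)) := hkey n hun
    -- take limit j → ∞
    have hlim : Tendsto (fun j : ℕ => (j : ℝ) / (j + 1)) atTop (nhds 1) :=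
      tendsto_natCast_div_add_atTop 1
    exact le_of_tendsto' hlim hstep
  rw [upperDensityWrt]
  exact le_antisymm h_le h_ge
end

section
/- Let (X,d) be a compact metric space, f : X → X continuous, Q = {q_k} an infinite subset of ℕ, a ∈ [0,1], and A ⊆ X a nonempty open set. Then the set of points x ∈ X such that the upper density of N(x,A) = {n ∈ ℕ : f^n(x) ∈ A} with respect to Q is at least a is a G_δ subset of X. -/
/-- The set of `ℳ̄_Q(a)`-attaching points of a nonempty open set `A` is `G_δ`. -/
theorem stmt1 {X : Type*} [MetricSpace X] [CompactSpace X] (f : X → X)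
    (hf : Continuous f) (Q : Set ℕ) (hQ : Q.Infinite)
    (a : ℝ) (ha : a ∈ Set.Icc (0 : ℝ) 1)
    (A : Set X) (hA : IsOpen A) (hAne : A.Nonempty) :
    IsGδ {x : X | a ≤ upperDensityWrt Q {n | f^[n] x ∈ A}} := by
  classical
  set q : ℕ → ℕ := Nat.nth (· ∈ Q) with hqdef
  set g : X → ℕ → ℝ := fun x m => (({k | k < m ∧ f^[q k] x ∈ A}).ncard : ℝ) / m with hgdef
  have hgud : ∀ x : X, upperDensityWrt Q {n | f^[n] x ∈ A} = Filter.limsup (g x) Filter.atTop :=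
    fun x => rfl
  have hset : ∀ (x : X) (m : ℕ), {k | k < m ∧ f^[q k] x ∈ A}
      = ↑((Finset.range m).filter (fun k => f^[q k] x ∈ A)) := by
    intro x m; ext k; simp [Finset.mem_filter]
  have hg0 : ∀ x m, 0 ≤ g x m := by
    intro x m
    exact div_nonneg (by positivity) (by positivity)
  have hg1 : ∀ x m, g x m ≤ 1 := by
    intro x m
    rcases Nat.eq_zero_or_pos m with hm | hm
    · simp [hgdef, hm]
    · rw [hgdef]
      rw [div_le_one (by exact_mod_cast hm)]
      rw [hset x m, Set.ncard_coe_finset]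
      exact_mod_cast (Finset.card_filter_le _ _).trans (le_of_eq (Finset.card_range m))
  -- openness
  have hopen : ∀ (m : ℕ) (c : ℝ), IsOpen {x : X | c < g x m} := by
    intro m c
    rcases Nat.eq_zero_or_pos m with hm | hm
    · simp only [hgdef, hm, Nat.cast_zero, div_zero]
      exact isOpen_const
    · have hlsc : LowerSemicontinuous (fun x : X =>
          (({k | k < m ∧ f^[q k] x ∈ A}).ncard : ℝ)) := by
        have heq : (fun x : X => (({k | k < m ∧ f^[q k] x ∈ A}).ncard : ℝ))
            = fun x : X => ∑ k ∈ Finset.range m,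
                Set.indicator ((f^[q k]) ⁻¹' A) (fun _ => (1 : ℝ)) x := by
          funext x
          rw [hset x m, Set.ncard_coe_finset, Finset.card_filter]
          push_cast
          refine Finset.sum_congr rfl fun k _ => ?_
          simp [Set.indicator_apply]
        rw [heq]
        refine lowerSemicontinuous_sum fun k _ => ?_
        exact (hA.preimage (hf.iterate (q k))).lowerSemicontinuous_indicator zero_le_one
      have : {x : X | c < g x m} = (fun x : X =>
          (({k | k < m ∧ f^[q k] x ∈ A}).ncard : ℝ)) ⁻¹' Set.Ioi (c * m) := by
        ext x
        simp only [hgdef, Set.mem_setOf_eq, Set.mem_preimage, Set.mem_Ioi]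
        rw [lt_div_iff₀ (by exact_mod_cast hm)]
      rw [this]
      exact lowerSemicontinuous_iff_isOpen_preimage.1 hlsc _
  have key : {x : X | a ≤ upperDensityWrt Q {n | f^[n] x ∈ A}}
      = ⋂ (j : ℕ), ⋂ (M : ℕ), ⋃ (m : ℕ), ⋃ (_ : M ≤ m),
          {x : X | a - 1 / (j + 1) < g x m} := by
    ext x
    simp only [Set.mem_setOf_eq, Set.mem_iInter, Set.mem_iUnion]
    rw [hgud x]
    constructor
    · intro hx j M
      have hcb : Filter.IsCoboundedUnder (· ≤ ·) Filter.atTop (g x) :=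
        Filter.IsBoundedUnder.isCoboundedUnder_le (Filter.isBoundedUnder_of ⟨0, fun m => hg0 x m⟩)
      have hlt : a - 1 / ((j : ℝ) + 1) < Filter.limsup (g x) Filter.atTop := by
        have : (0 : ℝ) < 1 / ((j : ℝ) + 1) := by positivity
        linarith
      have hfreq := Filter.frequently_lt_of_lt_limsup hcb hlt
      obtain ⟨m, hm1, hm2⟩ := (hfreq.and_eventually (Filter.eventually_ge_atTop M)).exists
      exact ⟨m, hm2, hm1⟩
    · intro hx
      have hbd : Filter.IsBoundedUnder (· ≤ ·) Filter.atTop (g x) :=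
        Filter.isBoundedUnder_of ⟨1, hg1 x⟩
      have hj : ∀ j : ℕ, a - 1 / ((j : ℝ) + 1) ≤ Filter.limsup (g x) Filter.atTop := by
        intro j
        refine Filter.le_limsup_of_frequently_le ?_ hbd
        rw [Filter.frequently_atTop]
        intro M
        obtain ⟨m, hM, hm⟩ := hx j M
        exact ⟨m, hM, hm.le⟩
      by_contra hcon
      push_neg at hcon
      obtain ⟨j, hjlt⟩ := exists_nat_one_div_lt (by linarith :
        (0 : ℝ) < a - Filter.limsup (g x) Filter.atTop)
      have := hj j
      have : ((j : ℝ) + 1) = ((j : ℝ) + 1) := rfl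
      linarith [hj j, hjlt]
  rw [key]
  refine IsGδ.iInter fun j => IsGδ.iInter fun M => IsOpen.isGδ ?_
  exact isOpen_iUnion fun m => isOpen_iUnion fun _ => hopen m _
end

section
/- Let (X,d) be a compact metric space, f : X → X continuous, Q ⊆ ℕ infinite, a ∈ [0,1], δ > 0, and A ⊆ X any subset. Then the set of points x ∈ X such that for every ε > 0 the upper density of N(x, [A]_ε) with respect to Q is at least a (the ℳ̄_Q(a)-adherent points of A) is a G_δ subset of X. -/
open Filter Metric Set

namespace Stmt3Aux

variable {X : Type*} [MetricSpace X] (f : X → X) (Q : Set ℕ) (A : Set X)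

/-- The counting quotient. -/
noncomputable def c (ε : ℝ) (m : ℕ) (x : X) : ℝ :=
  (({k | k < m ∧ f^[Nat.nth (· ∈ Q) k] x ∈ Metric.thickening ε A}).ncard : ℝ) / m

lemma finite_aux (ε : ℝ) (m : ℕ) (x : X) :
    {k | k < m ∧ f^[Nat.nth (· ∈ Q) k] x ∈ Metric.thickening ε A}.Finite :=
  (Set.finite_Iio m).subset fun k hk => hk.1

lemma c_nonneg (ε : ℝ) (m : ℕ) (x : X) : 0 ≤ c f Q A ε m x :=
  div_nonneg (Nat.cast_nonneg _) (Nat.cast_nonneg _)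

lemma c_le_one (ε : ℝ) (m : ℕ) (x : X) : c f Q A ε m x ≤ 1 := by
  rcases Nat.eq_zero_or_pos m with rfl | hm
  · simp [c]
  · rw [c, div_le_one (by exact_mod_cast hm)]
    have h : {k | k < m ∧ f^[Nat.nth (· ∈ Q) k] x ∈ Metric.thickening ε A}.ncard
        ≤ (Set.Iio m).ncard :=
      Set.ncard_le_ncard (fun k hk => hk.1) (Set.finite_Iio m)
    have h2 : (Set.Iio m).ncard = m := by
      rw [show (Set.Iio m) = ((Finset.range m : Finset ℕ) : Set ℕ) by ext k; simp,
        Set.ncard_coe_finset, Finset.card_range]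
    exact_mod_cast h.trans_eq h2

lemma c_mono (ε ε' : ℝ) (hε : ε ≤ ε') (m : ℕ) (x : X) :
    c f Q A ε m x ≤ c f Q A ε' m x := by
  rcases Nat.eq_zero_or_pos m with rfl | hm
  · simp [c]
  · have hm' : (0 : ℝ) < m := by exact_mod_cast hm
    have h : ({k | k < m ∧ f^[Nat.nth (· ∈ Q) k] x ∈ Metric.thickening ε A}.ncard : ℝ)
        ≤ ({k | k < m ∧ f^[Nat.nth (· ∈ Q) k] x ∈ Metric.thickening ε' A}.ncard : ℝ) := by
      have hsub : {k | k < m ∧ f^[Nat.nth (· ∈ Q) k] x ∈ Metric.thickening ε A}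
          ⊆ {k | k < m ∧ f^[Nat.nth (· ∈ Q) k] x ∈ Metric.thickening ε' A} :=
        fun k hk => ⟨hk.1, Metric.thickening_mono hε A hk.2⟩
      exact_mod_cast Set.ncard_le_ncard hsub (finite_aux f Q A ε' m x)
    unfold c
    gcongr

lemma isOpen_lt_c (hf : Continuous f) (ε b : ℝ) (m : ℕ) :
    IsOpen {x : X | b < c f Q A ε m x} := by
  classical
  have hU : IsOpen (Metric.thickening ε A) := Metric.isOpen_thickening
  have key : {x : X | b < c f Q A ε m x} =
      ⋃ S : {S : Finset ℕ // S ⊆ Finset.range m ∧ b < (S.card : ℝ) / m},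
        ⋂ k ∈ (S : Finset ℕ), (f^[Nat.nth (· ∈ Q) k]) ⁻¹' (Metric.thickening ε A) := by
    ext x
    simp only [Set.mem_setOf_eq, Set.mem_iUnion, Set.mem_iInter, Set.mem_preimage]
    constructor
    · intro hx
      refine ⟨⟨(Finset.range m).filter
        (fun k => f^[Nat.nth (· ∈ Q) k] x ∈ Metric.thickening ε A), ?_, ?_⟩, ?_⟩
      · exact Finset.filter_subset _ _
      · have heq : {k | k < m ∧ f^[Nat.nth (· ∈ Q) k] x ∈ Metric.thickening ε A} =
            ((Finset.range m).filter
              (fun k => f^[Nat.nth (· ∈ Q) k] x ∈ Metric.thickening ε A) : Finset ℕ) := by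
          ext k; simp [Finset.mem_filter, Finset.mem_range]
        rw [c, heq, Set.ncard_coe_finset] at hx
        exact hx
      · intro k hk
        exact (Finset.mem_filter.1 hk).2
    · rintro ⟨⟨S, hS, hcard⟩, hx⟩
      have hsub : (S : Set ℕ) ⊆
          {k | k < m ∧ f^[Nat.nth (· ∈ Q) k] x ∈ Metric.thickening ε A} := by
        intro k hk
        exact ⟨Finset.mem_range.1 (hS hk), hx k hk⟩
      have hle : (S.card : ℝ) ≤
          ({k | k < m ∧ f^[Nat.nth (· ∈ Q) k] x ∈ Metric.thickening ε A}.ncard : ℝ) := by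
        have := Set.ncard_le_ncard hsub (finite_aux f Q A ε m x)
        rw [Set.ncard_coe_finset] at this
        exact_mod_cast this
      refine hcard.trans_le ?_
      unfold c
      gcongr
  rw [key]
  exact isOpen_iUnion fun S =>
    isOpen_biInter_finset fun k _ => hU.preimage (hf.iterate _)

end Stmt3Aux

/-- The set of `ℳ̄_Q(a)`-adherent points of an arbitrary set `A` is `G_δ`. -/
theorem stmt3 {X : Type*} [MetricSpace X] [CompactSpace X] (f : X → X)
    (hf : Continuous f) (Q : Set ℕ) (hQ : Q.Infinite)
    (a : ℝ) (ha : a ∈ Set.Icc (0 : ℝ) 1) (δ : ℝ) (hδ : 0 < δ) (A : Set X) :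
    IsGδ {x : X | ∀ ε : ℝ, 0 < ε →
      a ≤ upperDensityWrt Q {n | f^[n] x ∈ Metric.thickening ε A}} := by
  classical
  have key : {x : X | ∀ ε : ℝ, 0 < ε →
      a ≤ upperDensityWrt Q {n | f^[n] x ∈ Metric.thickening ε A}}
      = ⋂ (i : ℕ) (j : ℕ) (M : ℕ), ⋃ m ∈ {m : ℕ | M ≤ m},
          {x : X | a - 1/((j:ℝ)+1) < Stmt3Aux.c f Q A (1/((i:ℝ)+1)) m x} := by
    ext x
    simp only [Set.mem_setOf_eq, Set.mem_iInter, Set.mem_iUnion, exists_prop]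
    constructor
    · intro hx i j M
      have h1 : a ≤ upperDensityWrt Q {n | f^[n] x ∈ Metric.thickening (1/((i:ℝ)+1)) A} :=
        hx _ (by positivity)
      have hD : upperDensityWrt Q {n | f^[n] x ∈ Metric.thickening (1/((i:ℝ)+1)) A}
          = Filter.limsup (fun m => Stmt3Aux.c f Q A (1/((i:ℝ)+1)) m x) Filter.atTop := rfl
      rw [hD] at h1
      have hjp : (0:ℝ) < 1/((j:ℝ)+1) := by positivity
      have hb : a - 1/((j:ℝ)+1)
          < Filter.limsup (fun m => Stmt3Aux.c f Q A (1/((i:ℝ)+1)) m x) Filter.atTop := by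
        linarith
      have hco : Filter.IsCoboundedUnder (· ≤ ·) Filter.atTop
          (fun m => Stmt3Aux.c f Q A (1/((i:ℝ)+1)) m x) :=
        Filter.IsBoundedUnder.isCoboundedUnder_le
          ⟨0, Filter.eventually_map.2 (Filter.Eventually.of_forall
            fun m => Stmt3Aux.c_nonneg f Q A _ m x)⟩
      have hfreq := Filter.frequently_lt_of_lt_limsup hco hb
      rw [Filter.frequently_atTop] at hfreq
      exact hfreq M
    · intro hx ε hε
      obtain ⟨i, hi⟩ := exists_nat_one_div_lt hε
      have hle : ∀ m, Stmt3Aux.c f Q A (1/((i:ℝ)+1)) m x ≤ Stmt3Aux.c f Q A ε m x :=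
        fun m => Stmt3Aux.c_mono f Q A _ _ hi.le m x
      have hbound : Filter.IsBoundedUnder (· ≤ ·) Filter.atTop
          (fun m => Stmt3Aux.c f Q A ε m x) :=
        ⟨1, Filter.eventually_map.2 (Filter.Eventually.of_forall
          fun m => Stmt3Aux.c_le_one f Q A ε m x)⟩
      have hD : upperDensityWrt Q {n | f^[n] x ∈ Metric.thickening ε A}
          = Filter.limsup (fun m => Stmt3Aux.c f Q A ε m x) Filter.atTop := rfl
      rw [hD]
      have step : ∀ j : ℕ, a - 1/((j:ℝ)+1)
          ≤ Filter.limsup (fun m => Stmt3Aux.c f Q A ε m x) Filter.atTop := by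
        intro j
        refine Filter.le_limsup_of_frequently_le ?_ hbound
        rw [Filter.frequently_atTop]
        intro M
        obtain ⟨m, hm, hm'⟩ := hx i j M
        exact ⟨m, hm, (hm'.trans_le (hle m)).le⟩
      by_contra hlt
      push_neg at hlt
      obtain ⟨j, hj⟩ := exists_nat_one_div_lt (sub_pos.2 hlt)
      have := step j
      linarith
  rw [key]
  refine IsGδ.iInter fun i => IsGδ.iInter fun j => IsGδ.iInter fun M => ?_
  exact (isOpen_biUnion fun m _ => Stmt3Aux.isOpen_lt_c f Q A hf _ _ m).isGδ
end

section
/- Let (X,d) be a compact metric space, f : X → X continuous, A ⊆ X closed and f-invariant, r ≥ 1, Q ⊆ ℕ infinite, a ∈ [0,1], and P = {n ∈ ℕ : ⌊n/r⌋ ∈ Q}. If x is such that for every ε > 0 the upper density of N_{f^r}(x,[A]_ε) with respect to Q is at least a, then for every ε > 0 the upper density of N_f(x,[A]_ε) with respect to P is at least a. -/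
open Filter Set Classical in
private lemma count_block (r : ℕ) (hr : 1 ≤ r) (Q : Set ℕ) :
    ∀ n : ℕ, ∀ s ≤ r, Nat.count (· ∈ {n | n / r ∈ Q}) (r * n + s)
      = r * Nat.count (· ∈ Q) n + (if n ∈ Q then s else 0) := by
  have key : ∀ n : ℕ, ∀ s, s ≤ r →
      Nat.count (· ∈ {n | n / r ∈ Q}) (r * n + s)
        = Nat.count (· ∈ {n | n / r ∈ Q}) (r * n) + (if n ∈ Q then s else 0) := by
    intro n s hs
    induction s with
    | zero => simp
    | succ s ih =>
      have hs' : s ≤ r := Nat.le_of_succ_le hs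
      have hdiv : (r * n + s) / r = n := by
        rw [Nat.mul_add_div (by omega)]
        have : s / r = 0 := Nat.div_eq_of_lt (by omega)
        omega
      rw [← Nat.add_assoc, Nat.count_succ, ih hs']
      by_cases hnQ : n ∈ Q <;> simp [hnQ, Set.mem_setOf_eq, hdiv]
      omega
  intro n
  induction n with
  | zero => intro s hs; simpa using key 0 s hs
  | succ n ih =>
    intro s hs
    have h1 : r * (n + 1) + s = r * n + (r + s) := by ring
    have base : Nat.count (· ∈ {n | n / r ∈ Q}) (r * (n + 1))
        = r * Nat.count (· ∈ Q) (n + 1) := by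
      have h0 := ih 0 (Nat.zero_le r)
      simp only [Nat.add_zero] at h0
      rw [Nat.mul_succ, key n r le_rfl, h0, Nat.count_succ]
      by_cases hnQ : n ∈ Q <;> simp [hnQ] <;> ring
    rw [key (n + 1) s hs, base]

open Classical in
private lemma nth_block (r : ℕ) (hr : 1 ≤ r) (Q : Set ℕ) (hQ : Q.Infinite)
    (i j : ℕ) (hj : j < r) :
    Nat.nth (· ∈ {n | n / r ∈ Q}) (r * i + j) = r * Nat.nth (· ∈ Q) i + j := by
  have hP : {n : ℕ | n / r ∈ Q}.Infinite := by
    refine Set.Infinite.mono ?_ (hQ.image (f := fun q => r * q) ?_)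
    · rintro n ⟨q, hq, rfl⟩
      simp [Set.mem_setOf_eq, Nat.mul_div_cancel_left q (by omega : 0 < r), hq]
    · intro a _ b _ h; simp at h; omega
  set q := Nat.nth (· ∈ Q) i with hqdef
  have hq : q ∈ Q := Nat.nth_mem_of_infinite hQ i
  have hdiv : (r * q + j) / r = q := by
    rw [Nat.mul_add_div (by omega)]
    have : j / r = 0 := Nat.div_eq_of_lt hj
    omega
  have hmem : (r * q + j) ∈ {n : ℕ | n / r ∈ Q} := by simp [Set.mem_setOf_eq, hdiv, hq]
  have hcount : Nat.count (· ∈ {n | n / r ∈ Q}) (r * q + j) = r * i + j := by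
    rw [count_block r hr Q q j hj.le, if_pos hq, hqdef,
      Nat.count_nth_of_infinite (p := (· ∈ Q)) hQ]
  have := Nat.nth_count (p := (· ∈ {n : ℕ | n / r ∈ Q})) hmem
  rw [hcount] at this
  exact this

open Classical in
private lemma ncard_filter (m : ℕ) (p : ℕ → Prop) :
    {k | k < m ∧ p k}.ncard = ((Finset.range m).filter p).card := by
  rw [← Set.ncard_coe_finset]
  congr 1
  ext k
  simp [Finset.mem_filter]

/-- If `x` is an `ℳ̄_Q(a)`-adherent point of a closed invariant set `A` for `f^r`,
then `x` is an `ℳ̄_P(a)`-adherent point of `A` for `f`, where `P = {n : ⌊n/r⌋ ∈ Q}`. -/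
theorem stmt5 {X : Type*} [MetricSpace X] [CompactSpace X] (f : X → X)
    (hf : Continuous f) (A : Set X) (hA : IsClosed A) (hinv : Set.MapsTo f A A)
    (r : ℕ) (hr : 1 ≤ r) (Q : Set ℕ) (hQ : Q.Infinite)
    (a : ℝ) (ha : a ∈ Set.Icc (0 : ℝ) 1) (x : X)
    (hx : ∀ ε : ℝ, 0 < ε →
      a ≤ upperDensityWrt Q {n | (f^[r])^[n] x ∈ Metric.thickening ε A}) :
    ∀ ε : ℝ, 0 < ε →
      a ≤ upperDensityWrt {n | n / r ∈ Q}
            {n | f^[n] x ∈ Metric.thickening ε A} := by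
  classical
  intro ε hε
  -- uniform continuity of the iterates
  have hiter : ∀ j : ℕ, ∃ δ > (0:ℝ), ∀ y, y ∈ Metric.thickening δ A →
      f^[j] y ∈ Metric.thickening ε A := by
    intro j
    have hu : UniformContinuous (f^[j]) :=
      CompactSpace.uniformContinuous_of_continuous (hf.iterate j)
    rw [Metric.uniformContinuous_iff] at hu
    obtain ⟨δ, hδ, h⟩ := hu ε hε
    refine ⟨δ, hδ, fun y hy => ?_⟩
    obtain ⟨z, hz, hdz⟩ := Metric.mem_thickening_iff.mp hy
    exact Metric.mem_thickening_iff.mpr ⟨f^[j] z, (hinv.iterate j) hz, h hdz⟩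
  choose D hD1 hD2 using hiter
  set δ := (Finset.range r).inf' ⟨0, Finset.mem_range.mpr (by omega)⟩ D with hδdef
  have hδpos : 0 < δ := by
    rw [hδdef]; refine (Finset.lt_inf'_iff _).2 ?_
    exact fun j _ => hD1 j
  have hδε : ∀ j < r, ∀ y ∈ Metric.thickening δ A, f^[j] y ∈ Metric.thickening ε A := by
    intro j hj y hy
    exact hD2 j y (Metric.thickening_mono (Finset.inf'_le D (Finset.mem_range.mpr hj)) A hy)
  set B : Set ℕ := {n | (f^[r])^[n] x ∈ Metric.thickening δ A} with hBdef
  set N : Set ℕ := {n | f^[n] x ∈ Metric.thickening ε A} with hNdef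
  set P : Set ℕ := {n | n / r ∈ Q} with hPdef
  have hBN : ∀ q ∈ B, ∀ j < r, r * q + j ∈ N := by
    intro q hq j hj
    have h1 : f^[r * q + j] x = f^[j] ((f^[r])^[q] x) := by
      rw [Nat.add_comm, Function.iterate_add_apply, Function.iterate_mul]
    simp only [hNdef, Set.mem_setOf_eq, h1]
    exact hδε j hj _ hq
  -- the two density sequences
  set u : ℕ → ℝ := fun m => (({k | k < m ∧ Nat.nth (· ∈ Q) k ∈ B}).ncard : ℝ) / m with hudef
  set v : ℕ → ℝ := fun m => (({k | k < m ∧ Nat.nth (· ∈ P) k ∈ N}).ncard : ℝ) / m with hvdef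
  have key : ∀ m, u m ≤ v (r * m) := by
    intro m
    set S := (Finset.range m).filter (fun k => Nat.nth (· ∈ Q) k ∈ B) with hSdef
    set T := (Finset.range (r * m)).filter (fun k => Nat.nth (· ∈ P) k ∈ N) with hTdef
    have hST : S.card * r ≤ T.card := by
      set E := (S ×ˢ Finset.range r).image (fun p : ℕ × ℕ => r * p.1 + p.2) with hEdef
      have hsub : E ⊆ T := by
        intro n hn
        obtain ⟨⟨k, j⟩, hmem, rfl⟩ := Finset.mem_image.mp hn
        rw [Finset.mem_product] at hmem
        obtain ⟨hkS, hjr⟩ := hmem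
        rw [hSdef, Finset.mem_filter, Finset.mem_range] at hkS
        rw [Finset.mem_range] at hjr
        rw [hTdef, Finset.mem_filter, Finset.mem_range]
        constructor
        · have h1 : r * k + j < r * (k + 1) := by rw [Nat.mul_succ]; omega
          exact h1.trans_le (Nat.mul_le_mul_left r hkS.1)
        · rw [hPdef, nth_block r hr Q hQ k j hjr]
          exact hBN _ hkS.2 j hjr
      have hinj : Set.InjOn (fun p : ℕ × ℕ => r * p.1 + p.2)
          ↑(S ×ˢ Finset.range r) := by
        rintro ⟨k, j⟩ hk ⟨k', j'⟩ hk' h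
        simp only [Finset.coe_product, Set.mem_prod, Finset.mem_coe,
          Finset.mem_range] at hk hk'
        have hj : j < r := hk.2
        have hj' : j' < r := hk'.2
        simp only at h
        obtain rfl : k = k' := by
          have h1 : (r * k + j) / r = k := by
            rw [Nat.mul_add_div (by omega)]; have := Nat.div_eq_of_lt hj; omega
          have h2 : (r * k' + j') / r = k' := by
            rw [Nat.mul_add_div (by omega)]; have := Nat.div_eq_of_lt hj'; omega
          rw [← h1, ← h2, h]
        simp only [Prod.mk.injEq, true_and]
        omega
      calc S.card * r = E.card := by
            rw [hEdef, Finset.card_image_of_injOn hinj, Finset.card_product,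
              Finset.card_range]
          _ ≤ T.card := Finset.card_le_card hsub
    have hucard : u m = (S.card : ℝ) / m := by
      rw [hudef]; simp only; rw [ncard_filter]
    have hvcard : v (r * m) = (T.card : ℝ) / (r * m) := by
      rw [hvdef]; simp only; rw [ncard_filter]; norm_cast
    rcases Nat.eq_zero_or_pos m with rfl | hm
    · simp [hucard, hvcard]
      positivity
    · rw [hucard, hvcard]
      have hrm : (0:ℝ) < (r : ℝ) * m := by positivity
      rw [div_le_div_iff₀ (by positivity) (by exact_mod_cast hrm)]
      push_cast
      have : (S.card : ℝ) * r ≤ T.card := by exact_mod_cast hST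
      nlinarith [this, (Nat.cast_pos (α := ℝ)).mpr hm]
  -- bounds for the sequences
  have hu0 : ∀ m, 0 ≤ u m := fun m => by
    rw [hudef]; positivity
  have hv0 : ∀ m, 0 ≤ v m := fun m => by
    rw [hvdef]; positivity
  have hv1 : ∀ m, v m ≤ 1 := by
    intro m
    rw [hvdef]
    simp only
    rw [ncard_filter]
    rcases Nat.eq_zero_or_pos m with rfl | hm
    · simp
    · rw [div_le_one (by exact_mod_cast hm)]
      exact_mod_cast (Finset.card_filter_le _ _).trans (Finset.card_range m).le
  -- limsup chain
  have h1 : a ≤ Filter.limsup u Filter.atTop := hx δ hδpos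
  have h2 : Filter.limsup u Filter.atTop ≤
      Filter.limsup (fun m => v (r * m)) Filter.atTop := by
    refine Filter.limsup_le_limsup (Filter.Eventually.of_forall key) ?_ ?_
    · exact Filter.isCoboundedUnder_le_of_le Filter.atTop hu0
    · exact ⟨1, Filter.eventually_map.mpr (Filter.Eventually.of_forall fun m => hv1 _)⟩
  have h3 : Filter.limsup (fun m => v (r * m)) Filter.atTop ≤
      Filter.limsup v Filter.atTop := by
    have heq : (fun m => v (r * m)) = v ∘ (fun m => r * m) := rfl
    rw [heq, Filter.limsup_comp]
    have htend : Filter.Tendsto (fun m : ℕ => r * m) Filter.atTop Filter.atTop :=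
      Filter.tendsto_atTop_mono (fun m => Nat.le_mul_of_pos_left m (by omega)) Filter.tendsto_id
    haveI : (Filter.map (fun m : ℕ => r * m) Filter.atTop).NeBot := Filter.map_neBot
    refine Filter.limsup_le_limsup_of_le htend ?_ ?_
    · exact Filter.isCoboundedUnder_le_of_le _ hv0
    · exact ⟨1, Filter.eventually_map.mpr (Filter.Eventually.of_forall fun m => hv1 _)⟩
  rw [upperDensityWrt]
  exact h1.trans (h2.trans h3)
end

section
/- Let (X,d) be a compact metric space, f : X → X continuous, and C ⊆ X. If C is uniformly recurrent for f (for every ε > 0 there exists n ∈ ℕ with d(f^n(x), x) < ε for all x ∈ C), then for every r ≥ 1, C is uniformly recurrent for f^r: for every ε > 0 there exists m ∈ ℕ with d((f^r)^m(x), x) < ε for all x ∈ C. -/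
/-- Uniform continuity of all iterates up to `T`, with a common modulus. -/
lemma ucAll {X : Type*} [MetricSpace X] [CompactSpace X] (f : X → X)
    (hf : Continuous f) (T : ℕ) {ε : ℝ} (hε : 0 < ε) :
    ∃ δ : ℝ, 0 < δ ∧ ∀ S ≤ T, ∀ y z : X, dist y z < δ →
      dist (f^[S] y) (f^[S] z) < ε := by
  induction T with
  | zero =>
    exact ⟨ε, hε, fun S hS y z hyz => by
      interval_cases S; simpa using hyz⟩
  | succ T ih =>
    obtain ⟨δ₁, hδ₁, H₁⟩ := ih
    have huc : UniformContinuous (f^[T + 1]) :=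
      CompactSpace.uniformContinuous_of_continuous (hf.iterate (T + 1))
    obtain ⟨δ₂, hδ₂, H₂⟩ := Metric.uniformContinuous_iff.mp huc ε hε
    refine ⟨min δ₁ δ₂, lt_min hδ₁ hδ₂, fun S hS y z hyz => ?_⟩
    rcases Nat.lt_or_ge S (T + 1) with hS' | hS'
    · exact H₁ S (Nat.lt_succ_iff.mp hS') y z (hyz.trans_le (min_le_left _ _))
    · have : S = T + 1 := le_antisymm hS hS'
      subst this
      exact H₂ (hyz.trans_le (min_le_right _ _))

/-- Construction of `k` positive integers such that every consecutive block sum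
gives an `ε`-recurrence time on `C`. -/
lemma auxBlocks {X : Type*} [MetricSpace X] [CompactSpace X] (f : X → X)
    (hf : Continuous f) (C : Set X)
    (h : ∀ ε : ℝ, 0 < ε → ∃ n : ℕ, 0 < n ∧ ∀ x ∈ C, dist (f^[n] x) x < ε) :
    ∀ (k : ℕ) (ε : ℝ), 0 < ε → ∃ n : ℕ → ℕ, (∀ i < k, 0 < n i) ∧
      ∀ i j, i ≤ j → j ≤ k → ∀ x ∈ C,
        dist (f^[(Finset.Ico i j).sum n] x) x < ε := by
  intro k
  induction k with
  | zero =>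
    intro ε hε
    refine ⟨fun _ => 1, fun i hi => absurd hi (Nat.not_lt_zero i), ?_⟩
    intro i j hij hj x hx
    interval_cases j
    interval_cases i
    simp [hε]
  | succ k ih =>
    intro ε hε
    obtain ⟨n, hnpos, hn⟩ := ih (ε / 2) (by linarith)
    set T : ℕ := (Finset.Ico 0 k).sum n with hT
    obtain ⟨δ, hδ, Hδ⟩ := ucAll f hf T (half_pos hε)
    obtain ⟨m, hm, Hm⟩ := h (min δ (ε / 2)) (lt_min hδ (by linarith))
    refine ⟨fun i => if i = k then m else n i, ?_, ?_⟩
    · intro i hi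
      by_cases hik : i = k
      · simp [hik, hm]
      · simpa [hik] using hnpos i (by omega)
    · intro i j hij hj x hx
      rcases Nat.lt_or_ge j (k + 1) with hj' | hj'
      · -- j ≤ k : block avoids index k, same as n
        have hjk : j ≤ k := Nat.lt_succ_iff.mp hj'
        have hsum : (Finset.Ico i j).sum (fun t => if t = k then m else n t)
            = (Finset.Ico i j).sum n := by
          apply Finset.sum_congr rfl
          intro t ht
          have : t < j := (Finset.mem_Ico.mp ht).2
          have : t ≠ k := by omega
          simp [this]
        rw [hsum]
        have := hn i j hij hjk x hx
        linarith
      · -- j = k + 1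
        have hjk : j = k + 1 := le_antisymm hj hj'
        subst hjk
        rcases Nat.lt_or_ge i (k + 1) with hi' | hi'
        · have hik : i ≤ k := Nat.lt_succ_iff.mp hi'
          have hsum : (Finset.Ico i (k + 1)).sum (fun t => if t = k then m else n t)
              = (Finset.Ico i k).sum n + m := by
            rw [Finset.sum_Ico_succ_top hik]
            simp only [if_pos rfl]
            congr 1
            apply Finset.sum_congr rfl
            intro t ht
            have : t < k := (Finset.mem_Ico.mp ht).2
            have : t ≠ k := by omega
            simp [this]
          rw [hsum]
          set S : ℕ := (Finset.Ico i k).sum n with hS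
          have hST : S ≤ T := by
            apply Finset.sum_le_sum_of_subset
            intro t ht
            simp only [Finset.mem_Ico] at ht ⊢
            omega
          have key : f^[S + m] x = f^[S] (f^[m] x) := Function.iterate_add_apply f S m x
          rw [key]
          have h1 : dist (f^[S] (f^[m] x)) (f^[S] x) < ε / 2 := by
            apply Hδ S hST
            exact lt_of_lt_of_le (Hm x hx) (min_le_left _ _)
          have h2 : dist (f^[S] x) x < ε / 2 := hn i k hik le_rfl x hx
          calc dist (f^[S] (f^[m] x)) x
              ≤ dist (f^[S] (f^[m] x)) (f^[S] x) + dist (f^[S] x) x := dist_triangle _ _ _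
            _ < ε / 2 + ε / 2 := by linarith
            _ = ε := by ring
        · -- i = k + 1, empty block
          have : i = k + 1 := le_antisymm hij hi'
          subst this
          simp [hε]

/-- A uniformly recurrent set for `f` is uniformly recurrent for `f^r`. -/
theorem stmt10 {X : Type*} [MetricSpace X] [CompactSpace X] (f : X → X)
    (hf : Continuous f) (C : Set X)
    (h : ∀ ε : ℝ, 0 < ε → ∃ n : ℕ, 0 < n ∧ ∀ x ∈ C, dist (f^[n] x) x < ε)
    (r : ℕ) (hr : 1 ≤ r) :
    ∀ ε : ℝ, 0 < ε → ∃ m : ℕ, 0 < m ∧ ∀ x ∈ C, dist ((f^[r])^[m] x) x < ε := by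
  intro ε hε
  obtain ⟨n, hnpos, hn⟩ := auxBlocks f hf C h r ε hε
  -- prefix sums mod r; pigeonhole among r+1 values into r residues
  set P : ℕ → ℕ := fun j => (Finset.Ico 0 j).sum n with hP
  have hmaps : ∀ j ∈ Finset.range (r + 1), P j % r ∈ Finset.range r := by
    intro j _
    exact Finset.mem_range.mpr (Nat.mod_lt _ hr)
  obtain ⟨a, ha, b, hb, hab, heq⟩ :=
    Finset.exists_ne_map_eq_of_card_lt_of_maps_to
      (by simp : (Finset.range r).card < (Finset.range (r + 1)).card) hmaps
  -- wlog a < b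
  obtain ⟨i, j, hij, hi, hj, hmod⟩ :
      ∃ i j, i < j ∧ j ≤ r ∧ i ≤ r ∧ P i % r = P j % r := by
    rcases lt_or_gt_of_ne hab with hlt | hgt
    · exact ⟨a, b, hlt, Nat.lt_succ_iff.mp (Finset.mem_range.mp hb),
        Nat.lt_succ_iff.mp (Finset.mem_range.mp ha), heq⟩
    · exact ⟨b, a, hgt, Nat.lt_succ_iff.mp (Finset.mem_range.mp ha),
        Nat.lt_succ_iff.mp (Finset.mem_range.mp hb), heq.symm⟩
  set N : ℕ := (Finset.Ico i j).sum n with hN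
  have hsplit : P i + N = P j :=
    Finset.sum_Ico_consecutive n (Nat.zero_le i) (le_of_lt hij)
  have hNpos : 0 < N := by
    apply Finset.sum_pos
    · intro t ht
      have := Finset.mem_Ico.mp ht
      exact hnpos t (by omega)
    · exact ⟨i, Finset.mem_Ico.mpr ⟨le_rfl, hij⟩⟩
  have hdvd : r ∣ N := by
    have : P i ≡ P j [MOD r] := hmod
    have h1 : r ∣ P j - P i := (Nat.modEq_iff_dvd' (by omega)).mp this
    have h2 : P j - P i = N := by omega
    rwa [h2] at h1
  obtain ⟨c, hc⟩ := hdvd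
  have hNpos' : 0 < r * c := hc ▸ hNpos
  have hcpos : 0 < c := Nat.pos_of_ne_zero (by rintro rfl; simp at hNpos')
  refine ⟨c, hcpos, fun x hx => ?_⟩
  have : (f^[r])^[c] x = f^[N] x := by
    rw [hc, Function.iterate_mul]
  rw [this]
  exact hn i j (le_of_lt hij) hi x hx
end

section
/- Let (X,d) be a compact metric space, f : X → X continuous, and C ⊆ X. If C is uniformly proximal for f (for every ε > 0 there exists n ∈ ℕ with diam(f^n(C)) < ε), then for every r ≥ 1, C is uniformly proximal for f^r: for every ε > 0 there exists m with diam((f^r)^m(C)) < ε. -/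
/-- A uniformly proximal set for `f` is uniformly proximal for `f^r`. -/
theorem stmt11 {X : Type*} [MetricSpace X] [CompactSpace X] (f : X → X)
    (hf : Continuous f) (C : Set X)
    (h : ∀ ε : ℝ, 0 < ε → ∃ n : ℕ, 0 < n ∧ Metric.diam (f^[n] '' C) < ε)
    (r : ℕ) (hr : 1 ≤ r) :
    ∀ ε : ℝ, 0 < ε → ∃ m : ℕ, 0 < m ∧ Metric.diam ((f^[r])^[m] '' C) < ε := by
  intro ε hε
  have huc : ∀ j : ℕ, ∃ δ : ℝ, 0 < δ ∧
      ∀ x y : X, dist x y < δ → dist (f^[j] x) (f^[j] y) < ε / 2 := by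
    intro j
    have hc : Continuous (f^[j]) := hf.iterate j
    have := CompactSpace.uniformContinuous_of_continuous hc
    rw [Metric.uniformContinuous_iff] at this
    obtain ⟨δ, hδ, hd⟩ := this (ε / 2) (by linarith)
    exact ⟨δ, hδ, fun x y hxy => hd hxy⟩
  choose δ hδpos hδ using huc
  set δ0 : ℝ := (Finset.range (r + 1)).inf' Finset.nonempty_range_add_one δ with hδ0def
  have hδ0pos : 0 < δ0 := by
    rw [hδ0def, Finset.lt_inf'_iff]
    intro i _
    exact hδpos i
  have hδ0le : ∀ j ≤ r, δ0 ≤ δ j := by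
    intro j hj
    exact Finset.inf'_le δ (Finset.mem_range.mpr (by omega))
  obtain ⟨n, hn, hdiam⟩ := h δ0 hδ0pos
  set m : ℕ := n / r + 1 with hmdef
  have hK : n / r * r + n % r = n := Nat.div_add_mod' n r
  have hKlt : n % r < r := Nat.mod_lt n (by omega)
  have hmr : m * r = n / r * r + r := by rw [hmdef]; ring
  have hrm : r * m = m * r := mul_comm r m
  have hnle : n ≤ m * r ∧ m * r - n ≤ r := by omega
  have hsum : r * m = (m * r - n) + n := by omega
  set j : ℕ := m * r - n with hjdef
  have hjr : j ≤ r := hnle.2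
  have key : (f^[r])^[m] '' C = f^[j] '' (f^[n] '' C) := by
    rw [← Set.image_comp, ← Function.iterate_add, ← hsum, ← Function.iterate_mul]
  refine ⟨m, Nat.succ_pos _, ?_⟩
  rw [key]
  have hbound : Metric.diam (f^[j] '' (f^[n] '' C)) ≤ ε / 2 := by
    apply Metric.diam_le_of_forall_dist_le (by linarith)
    rintro x ⟨a, ha, rfl⟩ y ⟨b, hb, rfl⟩
    have hab : dist a b < δ0 := by
      calc dist a b ≤ Metric.diam (f^[n] '' C) :=
            Metric.dist_le_diam_of_mem (isCompact_univ.isBounded.subset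
              (Set.subset_univ _)) ha hb
        _ < δ0 := hdiam
    exact le_of_lt (hδ j a b (lt_of_lt_of_le hab (hδ0le j hjr)))
  linarith
end

section
/- A subset K of a compact metric space X with continuous f : X → X is a uniformly chaotic set for f if and only if it is a uniformly chaotic set for f^r, for every r ≥ 1. -/
/-- `K` is a uniformly chaotic set for `g`: there is an increasing sequence of Cantor
sets with union `K` such that `K` is recurrent and proximal, and each `C N` is
uniformly recurrent and uniformly proximal. -/
def IsUniformlyChaoticSet {X : Type*} [MetricSpace X] (g : X → X) (K : Set X) : Prop :=
  ∃ C : ℕ → Set X,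
    (∀ N, C N ⊆ C (N + 1)) ∧
    K = ⋃ N, C N ∧
    (∀ N, IsCompact (C N) ∧ Perfect (C N) ∧ IsTotallyDisconnected (C N) ∧ (C N).Nonempty) ∧
    (∀ F : Finset X, ↑F ⊆ K → ∀ ε : ℝ, 0 < ε →
      ∃ n : ℕ, 0 < n ∧ ∀ x ∈ F, dist (g^[n] x) x < ε) ∧
    (∀ F : Finset X, ↑F ⊆ K → ∀ ε : ℝ, 0 < ε →
      ∃ n : ℕ, 0 < n ∧ ∀ x ∈ F, ∀ y ∈ F, dist (g^[n] x) (g^[n] y) < ε) ∧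
    (∀ N, ∀ ε : ℝ, 0 < ε → ∃ n : ℕ, 0 < n ∧ ∀ x ∈ C N, dist (g^[n] x) x < ε) ∧
    (∀ N, ∀ ε : ℝ, 0 < ε → ∃ n : ℕ, 0 < n ∧
      ∀ x ∈ C N, ∀ y ∈ C N, dist (g^[n] x) (g^[n] y) < ε)

section Aux

variable {X : Type*} [MetricSpace X] [CompactSpace X] {f : X → X}

/-- A uniform continuity modulus valid for all iterates `f^[j]`, `j ≤ r`, at once. -/
lemma iter_modulus (hf : Continuous f) (r : ℕ) {ε : ℝ} (hε : 0 < ε) :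
    ∃ δ : ℝ, 0 < δ ∧ ∀ j ≤ r, ∀ a b : X, dist a b < δ → dist (f^[j] a) (f^[j] b) < ε := by
  induction r with
  | zero =>
    refine ⟨ε, hε, ?_⟩
    intro j hj a b hab
    interval_cases j
    simpa using hab
  | succ r ih =>
    obtain ⟨δ₁, hδ₁, h₁⟩ := ih
    have hc : UniformContinuous (f^[r+1]) :=
      CompactSpace.uniformContinuous_of_continuous (hf.iterate (r+1))
    obtain ⟨δ₂, hδ₂, h₂⟩ := Metric.uniformContinuous_iff.mp hc ε hε
    refine ⟨min δ₁ δ₂, lt_min hδ₁ hδ₂, ?_⟩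
    intro j hj a b hab
    rcases Nat.lt_succ_iff_lt_or_eq.mp (Nat.lt_succ_of_le hj) with h | h
    · exact h₁ j (Nat.lt_succ_iff.mp h) a b (hab.trans_le (min_le_left _ _))
    · rw [h]
      exact h₂ (hab.trans_le (min_le_right _ _))

/-- From uniform recurrence, get uniform recurrence along multiples of `r`. -/
lemma rec_multiple (hf : Continuous f) (S : Set X)
    (hrec : ∀ ε : ℝ, 0 < ε → ∃ n, 0 < n ∧ ∀ x ∈ S, dist (f^[n] x) x < ε)
    {r : ℕ} (hr : 1 ≤ r) {ε : ℝ} (hε : 0 < ε) :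
    ∃ n, 0 < n ∧ r ∣ n ∧ ∀ x ∈ S, dist (f^[n] x) x < ε := by
  have hr0 : (0:ℝ) < r := by exact_mod_cast hr
  set η := ε / r with hηdef
  have hη : 0 < η := div_pos hε hr0
  -- IP-style construction of partial sums of return times
  have claim : ∀ k : ℕ, ∃ s : ℕ → ℕ, s 0 = 0 ∧ (∀ i, i < k → s i < s (i+1)) ∧
      (∀ i j, i < j → j ≤ k → ∀ x ∈ S, dist (f^[s j - s i] x) x < ((j - i : ℕ) : ℝ) * η) := by
    intro k
    induction k with
    | zero =>
      exact ⟨fun _ => 0, rfl, fun i hi => absurd hi (Nat.not_lt_zero i),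
        fun i j hij hj => absurd (hij.trans_le hj) (Nat.not_lt_zero i)⟩
    | succ k ih =>
      obtain ⟨s, hs0, hmono, hblk⟩ := ih
      have hstep : ∀ d i, i + d ≤ k → s i ≤ s (i + d) := by
        intro d
        induction d with
        | zero => intro i _; simp
        | succ d hd =>
          intro i h
          have h1 : s i ≤ s (i + d) := hd i (by omega)
          have h2 : s (i + d) < s (i + d + 1) := hmono _ (by omega)
          rw [← Nat.add_assoc]
          omega
      have hsle : ∀ i, i ≤ k → s i ≤ s k := by
        intro i hi
        have := hstep (k - i) i (by omega)
        rwa [show i + (k - i) = k by omega] at this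
      obtain ⟨δ, hδ, hδp⟩ := iter_modulus hf (s k) hη
      obtain ⟨m, hm0, hmrec⟩ := hrec δ hδ
      refine ⟨fun i => if i ≤ k then s i else s k + m, by simp [hs0], ?_, ?_⟩
      · intro i hi
        by_cases h : i + 1 ≤ k
        · simp only [if_pos (by omega : i ≤ k), if_pos h]
          exact hmono i (by omega)
        · have hik : i = k := by omega
          simp only [if_pos (show i ≤ k by omega), if_neg (show ¬ i + 1 ≤ k by omega)]
          rw [hik]
          omega
      · intro i j hij hj x hx
        by_cases hjk : j ≤ k
        · simp only [if_pos (le_trans hij.le hjk), if_pos hjk]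
          exact hblk i j hij hjk x hx
        · have hjk1 : j = k + 1 := by omega
          subst hjk1
          have hik : i ≤ k := by omega
          simp only [if_pos hik, if_neg (by omega : ¬ (k + 1 ≤ k))]
          have hdiff : s k + m - s i = (s k - s i) + m := by
            have := hsle i hik; omega
          rw [hdiff, Function.iterate_add_apply]
          have hx1 : dist (f^[m] x) x < δ := hmrec x hx
          have hterm1 : dist (f^[s k - s i] (f^[m] x)) (f^[s k - s i] x) < η :=
            hδp (s k - s i) (by omega) _ _ hx1
          have htr := dist_triangle (f^[s k - s i] (f^[m] x)) (f^[s k - s i] x) x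
          by_cases hik2 : i = k
          · rw [hik2] at hterm1 ⊢
            rw [Nat.sub_self] at hterm1 ⊢
            simp only [Function.iterate_zero, id_eq] at hterm1 ⊢
            have hc1 : ((k + 1 - k : ℕ) : ℝ) = 1 := by norm_num
            rw [hc1, one_mul]
            exact hterm1
          · have hterm2 : dist (f^[s k - s i] x) x < ((k - i : ℕ) : ℝ) * η :=
              hblk i k (by omega) le_rfl x hx
            have hc2 : ((k + 1 - i : ℕ) : ℝ) * η = ((k - i : ℕ) : ℝ) * η + η := by
              rw [show (k + 1 - i) = (k - i) + 1 from by omega]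
              push_cast
              ring
            rw [hc2]
            linarith
  obtain ⟨s, hs0, hmono, hblk⟩ := claim r
  have hstep : ∀ d i, i + d ≤ r → s i ≤ s (i + d) := by
    intro d
    induction d with
    | zero => intro i _; simp
    | succ d hd =>
      intro i h
      have h1 : s i ≤ s (i + d) := hd i (by omega)
      have h2 : s (i + d) < s (i + d + 1) := hmono _ (by omega)
      rw [← Nat.add_assoc]
      omega
  have hlt : ∀ i j, i < j → j ≤ r → s i < s j := by
    intro i j hij hj
    have h1 : s i < s (i + 1) := hmono i (by omega)
    have h2 : s (i + 1) ≤ s (i + 1 + (j - (i + 1))) := hstep (j - (i + 1)) (i + 1) (by omega)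
    rw [show i + 1 + (j - (i + 1)) = j from by omega] at h2
    omega
  -- key step given two indices with equal residues
  have key : ∀ i j, i < j → j ≤ r → s i % r = s j % r →
      ∃ n, 0 < n ∧ r ∣ n ∧ ∀ x ∈ S, dist (f^[n] x) x < ε := by
    intro i j hij hjr hmod
    refine ⟨s j - s i, ?_, ?_, ?_⟩
    · have := hlt i j hij hjr; omega
    · exact Nat.dvd_of_mod_eq_zero (Nat.sub_mod_eq_zero_of_mod_eq hmod.symm)
    · intro x hx
      have h1 := hblk i j hij hjr x hx
      have hji : ((j - i : ℕ) : ℝ) ≤ (r : ℝ) := by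
        exact_mod_cast (show j - i ≤ r by omega)
      have h2 : ((j - i : ℕ) : ℝ) * η ≤ (r : ℝ) * η := by nlinarith
      have h3 : (r : ℝ) * η = ε := by
        rw [hηdef, mul_div_cancel₀ _ (ne_of_gt hr0)]
      linarith
  -- pigeonhole on residues
  have hmaps : ∀ i ∈ Finset.range (r + 1), s i % r ∈ Finset.range r := by
    intro i _
    exact Finset.mem_range.mpr (Nat.mod_lt _ (by omega))
  have hcard : (Finset.range r).card < (Finset.range (r + 1)).card := by simp
  obtain ⟨i, hi, j, hj, hne, heq⟩ :=
    Finset.exists_ne_map_eq_of_card_lt_of_maps_to hcard hmaps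
  rcases hne.lt_or_gt with h | h
  · exact key i j h (Nat.lt_succ_iff.mp (Finset.mem_range.mp hj)) heq
  · exact key j i h (Nat.lt_succ_iff.mp (Finset.mem_range.mp hi)) heq.symm

/-- From uniform proximality, get uniform proximality along multiples of `r`. -/
lemma prox_multiple (hf : Continuous f) (S : Set X)
    (hprox : ∀ ε : ℝ, 0 < ε → ∃ n, 0 < n ∧ ∀ x ∈ S, ∀ y ∈ S, dist (f^[n] x) (f^[n] y) < ε)
    {r : ℕ} (hr : 1 ≤ r) {ε : ℝ} (hε : 0 < ε) :
    ∃ n, 0 < n ∧ r ∣ n ∧ ∀ x ∈ S, ∀ y ∈ S, dist (f^[n] x) (f^[n] y) < ε := by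
  obtain ⟨δ, hδ, hδp⟩ := iter_modulus hf r hε
  obtain ⟨n, hn0, hn⟩ := hprox δ hδ
  set m := (r - n % r) % r with hm
  have hrpos : 0 < r := hr
  have hmlt : m < r := Nat.mod_lt _ hrpos
  have hnmod : n % r < r := Nat.mod_lt _ hrpos
  have hdvd : r ∣ (n + m) := by
    apply Nat.dvd_of_mod_eq_zero
    rcases Nat.eq_zero_or_pos (n % r) with h | h
    · have hm0 : m = 0 := by rw [hm, h, Nat.sub_zero, Nat.mod_self]
      rw [hm0, Nat.add_zero]; exact h
    · have hm' : m = r - n % r := by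
        rw [hm]; exact Nat.mod_eq_of_lt (by omega)
      have hsum : n % r + m = r := by omega
      rw [Nat.add_mod, Nat.mod_eq_of_lt hmlt, hsum, Nat.mod_self]
  refine ⟨n + m, by omega, hdvd, ?_⟩
  intro x hx y hy
  rw [Nat.add_comm, Function.iterate_add_apply, Function.iterate_add_apply]
  exact hδp m hmlt.le _ _ (hn x hx y hy)

end Aux

/-- `K` is uniformly chaotic for `f` iff it is uniformly chaotic for `f^r`, for every `r ≥ 1`. -/
theorem stmt12 {X : Type*} [MetricSpace X] [CompactSpace X] (f : X → X)
    (hf : Continuous f) (K : Set X) :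
    ∀ r : ℕ, 1 ≤ r → (IsUniformlyChaoticSet f K ↔ IsUniformlyChaoticSet (f^[r]) K) := by
  intro r hr
  constructor
  · rintro ⟨C, h1, h2, h3, h4, h5, h6, h7⟩
    refine ⟨C, h1, h2, h3, ?_, ?_, ?_, ?_⟩
    · intro F hF ε hε
      obtain ⟨n, hn0, ⟨q, rfl⟩, hprop⟩ :=
        rec_multiple hf (↑F) (fun ε hε => h4 F hF ε hε) hr hε
      have hq : 0 < q := by
        rcases Nat.eq_zero_or_pos q with h | h
        · subst h; simp at hn0
        · exact h
      refine ⟨q, hq, ?_⟩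
      intro x hx
      rw [← Function.iterate_mul]
      exact hprop x hx
    · intro F hF ε hε
      obtain ⟨n, hn0, ⟨q, rfl⟩, hprop⟩ :=
        prox_multiple hf (↑F) (fun ε hε => h5 F hF ε hε) hr hε
      have hq : 0 < q := by
        rcases Nat.eq_zero_or_pos q with h | h
        · subst h; simp at hn0
        · exact h
      refine ⟨q, hq, ?_⟩
      intro x hx y hy
      rw [← Function.iterate_mul]
      exact hprop x hx y hy
    · intro N ε hε
      obtain ⟨n, hn0, ⟨q, rfl⟩, hprop⟩ :=
        rec_multiple hf (C N) (fun ε hε => h6 N ε hε) hr hε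
      have hq : 0 < q := by
        rcases Nat.eq_zero_or_pos q with h | h
        · subst h; simp at hn0
        · exact h
      refine ⟨q, hq, ?_⟩
      intro x hx
      rw [← Function.iterate_mul]
      exact hprop x hx
    · intro N ε hε
      obtain ⟨n, hn0, ⟨q, rfl⟩, hprop⟩ :=
        prox_multiple hf (C N) (fun ε hε => h7 N ε hε) hr hε
      have hq : 0 < q := by
        rcases Nat.eq_zero_or_pos q with h | h
        · subst h; simp at hn0
        · exact h
      refine ⟨q, hq, ?_⟩
      intro x hx y hy
      rw [← Function.iterate_mul]
      exact hprop x hx y hy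
  · rintro ⟨C, h1, h2, h3, h4, h5, h6, h7⟩
    refine ⟨C, h1, h2, h3, ?_, ?_, ?_, ?_⟩
    · intro F hF ε hε
      obtain ⟨n, hn0, hprop⟩ := h4 F hF ε hε
      refine ⟨r * n, Nat.mul_pos hr hn0, ?_⟩
      intro x hx
      rw [Function.iterate_mul]
      exact hprop x hx
    · intro F hF ε hε
      obtain ⟨n, hn0, hprop⟩ := h5 F hF ε hε
      refine ⟨r * n, Nat.mul_pos hr hn0, ?_⟩
      intro x hx y hy
      rw [Function.iterate_mul]
      exact hprop x hx y hy
    · intro N ε hε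
      obtain ⟨n, hn0, hprop⟩ := h6 N ε hε
      refine ⟨r * n, Nat.mul_pos hr hn0, ?_⟩
      intro x hx
      rw [Function.iterate_mul]
      exact hprop x hx
    · intro N ε hε
      obtain ⟨n, hn0, hprop⟩ := h7 N ε hε
      refine ⟨r * n, Nat.mul_pos hr hn0, ?_⟩
      intro x hx y hy
      rw [Function.iterate_mul]
      exact hprop x hx y hy
end

section
/- Let Q = {q_1 < q_2 < ⋯} be an infinite subset of ℕ and let P be the IP-set generated by Q, i.e. the set of all finite sums q_{i_1} + ⋯ + q_{i_m} with i_1 < i_2 < ⋯ < i_m, m ≥ 1. Then P satisfies: for every n > 0 there exists k ∈ ℕ such that #(P ∩ [i−k, i+k]) > n for every i ∈ P. -/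
/-- An IP-set generated by a strictly increasing sequence satisfies: for every `n > 0`
there is `k` such that every point `i` of `P` has more than `n` elements of `P` within
distance `k`. -/
theorem stmt14 (q : ℕ → ℕ) (hq : StrictMono q) (hq0 : 0 < q 0)
    (P : Set ℕ) (hP : P = {s | ∃ F : Finset ℕ, F.Nonempty ∧ s = ∑ i ∈ F, q i}) :
    ∀ n : ℕ, 0 < n → ∃ k : ℕ, ∀ i ∈ P, n < (P ∩ Set.Icc (i - k) (i + k)).ncard := by
  intro n hn
  refine ⟨q n, ?_⟩
  intro i hi
  have hqpos : ∀ j, 0 < q j := fun j => lt_of_lt_of_le hq0 (hq.monotone (Nat.zero_le j))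
  rw [hP] at hi
  obtain ⟨F, hFne, hieq⟩ := hi
  have hle : ∀ j ∈ F, q j ≤ i := by
    intro j hj
    rw [hieq]
    exact Finset.single_le_sum (fun _ _ => Nat.zero_le _) hj
  have hipos : 0 < i := by
    obtain ⟨j, hj⟩ := hFne
    exact lt_of_lt_of_le (hqpos j) (hle j hj)
  set e : ℕ → ℕ := fun j => if j ∈ F then i - q j else i + q j with he
  set G : Finset ℕ := (Finset.range (n+1)).filter (fun j => F ≠ {j}) with hG
  set T : Finset ℕ := insert i (G.image e) with hT
  -- each e j is in P and close to i
  have heP : ∀ j ∈ G, e j ∈ {s | ∃ F : Finset ℕ, F.Nonempty ∧ s = ∑ i ∈ F, q i} := by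
    intro j hj
    rw [hG, Finset.mem_filter] at hj
    obtain ⟨-, hjne⟩ := hj
    by_cases hjF : j ∈ F
    · have hsum : ∑ x ∈ F.erase j, q x + q j = ∑ x ∈ F, q x := Finset.sum_erase_add F _ hjF
      have herne : (F.erase j).Nonempty := by
        rw [Finset.nonempty_iff_ne_empty]
        intro h
        rcases (Finset.erase_eq_empty_iff F j).mp h with h' | h'
        · exact hFne.ne_empty h'
        · exact hjne h'
      refine ⟨F.erase j, herne, ?_⟩
      simp only [he, if_pos hjF]
      omega
    · refine ⟨insert j F, Finset.insert_nonempty _ _, ?_⟩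
      rw [Finset.sum_insert hjF]
      simp only [he, if_neg hjF]
      omega
  have heIcc : ∀ j ∈ G, e j ∈ Set.Icc (i - q n) (i + q n) := by
    intro j hj
    rw [hG, Finset.mem_filter, Finset.mem_range] at hj
    have hqn : q j ≤ q n := hq.monotone (by omega)
    simp only [he]
    by_cases hjF : j ∈ F
    · simp only [if_pos hjF, Set.mem_Icc]; omega
    · simp only [if_neg hjF, Set.mem_Icc]; omega
  -- injectivity of e on G
  have hinj : Set.InjOn e G := by
    intro a ha b hb hab
    rw [hG, Finset.coe_filter, Set.mem_setOf_eq] at ha hb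
    have hqa := hqpos a
    have hqb := hqpos b
    simp only [he] at hab
    by_cases haF : a ∈ F <;> by_cases hbF : b ∈ F
    · have h1 := hle a haF; have h2 := hle b hbF
      rw [if_pos haF, if_pos hbF] at hab
      exact hq.injective (by omega)
    · have h1 := hle a haF
      rw [if_pos haF, if_neg hbF] at hab
      omega
    · have h2 := hle b hbF
      rw [if_neg haF, if_pos hbF] at hab
      omega
    · rw [if_neg haF, if_neg hbF] at hab
      exact hq.injective (by omega)
  -- i not in the image
  have hinotim : i ∉ G.image e := by
    rw [Finset.mem_image]
    rintro ⟨j, hj, hji⟩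
    have := hqpos j
    simp only [he] at hji
    by_cases hjF : j ∈ F
    · have := hle j hjF
      rw [if_pos hjF] at hji
      omega
    · rw [if_neg hjF] at hji
      omega
  -- T is inside the target set
  have hsub : (T : Set ℕ) ⊆ P ∩ Set.Icc (i - q n) (i + q n) := by
    intro x hx
    rw [hT] at hx
    simp only [Finset.coe_insert, Set.mem_insert_iff, Finset.coe_image,
      Set.mem_image, Finset.mem_coe] at hx
    rcases hx with rfl | ⟨j, hj, rfl⟩
    · constructor
      · rw [hP]; exact ⟨F, hFne, hieq⟩
      · simp only [Set.mem_Icc]; omega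
    · exact ⟨by rw [hP]; exact heP j hj, heIcc j hj⟩
  -- cardinality of T is at least n+1
  have hGcard : n ≤ G.card := by
    have hsplit := Finset.card_filter_add_card_filter_not
      (s := Finset.range (n+1)) (p := fun j => F ≠ {j})
    have hbad : ((Finset.range (n+1)).filter (fun j => ¬ F ≠ {j})).card ≤ 1 := by
      apply Finset.card_le_one.mpr
      intro a ha b hb
      rw [Finset.mem_filter] at ha hb
      have ha' : F = {a} := not_not.mp ha.2
      have hb' : F = {b} := not_not.mp hb.2
      rw [ha'] at hb'
      exact Finset.singleton_injective hb'
    rw [Finset.card_range] at hsplit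
    rw [hG]
    omega
  have hTcard : n + 1 ≤ T.card := by
    rw [hT, Finset.card_insert_of_notMem hinotim,
      Finset.card_image_of_injOn hinj]
    omega
  have hfin : (P ∩ Set.Icc (i - q n) (i + q n)).Finite :=
    (Set.finite_Icc _ _).subset Set.inter_subset_right
  have := Set.ncard_le_ncard hsub hfin
  rw [Set.ncard_coe_finset] at this
  omega
end

section
/- Let (X,d) be compact metric, f : X → X continuous, n ≥ 2, and r ≥ 1. Let Q ⊆ ℕ be infinite, and set Q' = {m ∈ ℕ : Q ∩ [mr, (m+1)r) ≠ ∅}. If (x_1,…,x_n) ∈ X^n is such that for every ε' > 0 the set {m ∈ Q' : max_{i<j} d((f^r)^m(x_i), (f^r)^m(x_j)) < ε'} has upper density 1 with respect to Q', then for every ε > 0 the set {q ∈ Q : max_{i<j} d(f^q(x_i), f^q(x_j)) < ε} has upper density 1 with respect to Q. -/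
open Filter Finset

private lemma densAux (Q P : Set ℕ) (m : ℕ) [DecidablePred (· ∈ P)] :
    {k | k < m ∧ Nat.nth (· ∈ Q) k ∈ P}.ncard
      = ((Finset.range m).filter (fun k => Nat.nth (· ∈ Q) k ∈ P)).card := by
  rw [← Set.ncard_coe_finset]
  congr 1
  ext k
  simp [Finset.mem_filter, Finset.mem_range]

private lemma limsupOneAux (u : ℕ → ℝ) (h0 : ∀ m, 0 ≤ u m) (h1 : ∀ m, u m ≤ 1)
    (hfreq : ∀ δ : ℝ, 0 < δ → ∃ᶠ m in atTop, 1 - δ ≤ u m) :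
    Filter.limsup u Filter.atTop = 1 := by
  have hb : Filter.IsBoundedUnder (· ≤ ·) Filter.atTop u :=
    Filter.isBoundedUnder_of ⟨1, h1⟩
  have hco : Filter.IsCoboundedUnder (· ≤ ·) Filter.atTop u :=
    Filter.isCoboundedUnder_le_of_le _ h0
  refine le_antisymm (Filter.limsup_le_of_le hco (Filter.Eventually.of_forall h1)) ?_
  have key : ∀ δ : ℝ, 0 < δ → 1 - δ ≤ Filter.limsup u Filter.atTop := fun δ hδ =>
    Filter.le_limsup_of_frequently_le (hfreq δ hδ) hb
  refine le_of_forall_pos_le_add fun δ hδ => ?_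
  have := key δ hδ
  linarith

/-- If a tuple is an `ℳ̄_{Q'}(1)`-adherent point of the diagonal for `f^r`, where
`Q' = {m : Q ∩ [mr,(m+1)r) ≠ ∅}`, then it is an `ℳ̄_Q(1)`-adherent point of the
diagonal for `f`. -/
theorem stmt18 {X : Type*} [MetricSpace X] [CompactSpace X] (f : X → X)
    (hf : Continuous f) (n : ℕ) (hn : 2 ≤ n) (r : ℕ) (hr : 1 ≤ r)
    (Q : Set ℕ) (hQ : Q.Infinite)
    (Q' : Set ℕ) (hQ' : Q' = {m : ℕ | ∃ i ∈ Q, m * r ≤ i ∧ i < (m + 1) * r})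
    (x : Fin n → X)
    (hx : ∀ ε' : ℝ, 0 < ε' → upperDensityWrt Q'
      {m | m ∈ Q' ∧ ∀ i j, dist ((f^[r])^[m] (x i)) ((f^[r])^[m] (x j)) < ε'} = 1) :
    ∀ ε : ℝ, 0 < ε → upperDensityWrt Q
      {q | q ∈ Q ∧ ∀ i j, dist (f^[q] (x i)) (f^[q] (x j)) < ε} = 1 := by
  classical
  intro ε hε
  have hr0 : 0 < r := hr
  -- uniform continuity of the iterates
  have hucont : ∀ i : ℕ, ∃ δ > 0, ∀ a b : X, dist a b < δ → dist (f^[i] a) (f^[i] b) < ε := by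
    intro i
    have h1 : UniformContinuous (f^[i]) :=
      CompactSpace.uniformContinuous_of_continuous (hf.iterate i)
    obtain ⟨δ, hδ0, hδ⟩ := Metric.uniformContinuous_iff.mp h1 ε hε
    exact ⟨δ, hδ0, fun a b hab => hδ hab⟩
  choose δ hδpos hδ using hucont
  obtain ⟨ε', hε'pos, hε'le⟩ : ∃ ε' > 0, ∀ i < r, ε' ≤ δ i := by
    refine ⟨(Finset.range r).inf' ⟨0, Finset.mem_range.2 hr0⟩ δ, ?_, ?_⟩
    · exact (Finset.lt_inf'_iff _).2 fun i _ => hδpos i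
    · intro i hi; exact Finset.inf'_le _ (Finset.mem_range.2 hi)
  have hxG := hx ε' hε'pos
  set A : Set ℕ := {q | q ∈ Q ∧ ∀ i j, dist (f^[q] (x i)) (f^[q] (x j)) < ε} with hA
  set G : Set ℕ := {m | m ∈ Q' ∧ ∀ i j,
      dist ((f^[r])^[m] (x i)) ((f^[r])^[m] (x j)) < ε'} with hGdef
  set p : ℕ → Prop := (· ∈ Q) with hp
  set p' : ℕ → Prop := (· ∈ Q') with hp'
  have hpinf : {k | p k}.Infinite := hQ
  -- membership of quotients in Q'
  have hmemQ' : ∀ q ∈ Q, q / r ∈ Q' := by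
    intro q hq
    rw [hQ']
    refine ⟨q, hq, Nat.div_mul_le_self q r, ?_⟩
    have h1 := Nat.div_add_mod q r
    have h2 := Nat.mod_lt q hr0
    calc q = r * (q / r) + q % r := h1.symm
      _ < r * (q / r) + r := by omega
      _ = (q / r + 1) * r := by ring
  have hQ'inf : Q'.Infinite := by
    apply Set.infinite_of_not_bddAbove
    rintro ⟨b, hb⟩
    obtain ⟨q, hqQ, hq⟩ := hQ.exists_gt ((b + 1) * r)
    have h2 : q / r ≤ b := hb (hmemQ' q hqQ)
    have h3 : q < (b + 1) * r := (Nat.div_lt_iff_lt_mul hr0).1 (Nat.lt_succ_of_le h2)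
    omega
  have hp'inf : {k | p' k}.Infinite := hQ'inf
  -- key pointwise claim
  have hkey : ∀ q ∈ Q, q / r ∈ G → q ∈ A := by
    intro q hq hqG
    refine ⟨hq, fun i j => ?_⟩
    set m := q / r with hm
    set s := q - m * r with hs
    have hmr : m * r ≤ q := Nat.div_mul_le_self q r
    have hc : m * r = r * m := Nat.mul_comm m r
    have hsr : s < r := by
      have h1 : r * m + q % r = q := by rw [hm]; exact Nat.div_add_mod q r
      have h2 := Nat.mod_lt q hr0
      omega
    have hq_eq : q = s + r * m := by omega
    have hrw : ∀ y : X, f^[q] y = f^[s] ((f^[r])^[m] y) := by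
      intro y
      rw [hq_eq, Function.iterate_add_apply, Function.iterate_mul]
    rw [hrw, hrw]
    apply hδ s
    exact lt_of_lt_of_le (hqG.2 i j) (hε'le s hsr)
  -- main counting estimate
  have main : ∀ t : ℕ, 1 ≤ t → ∃ s : ℕ, t ≤ s ∧ 1 ≤ s ∧
      s ≤ ((Finset.range s).filter (fun k => Nat.nth p k ∈ A)).card
            + r * ((Finset.range t).filter (fun k => Nat.nth p' k ∉ G)).card := by
    intro t ht
    set M := Nat.nth p' (t - 1) with hM
    set s := Nat.count p ((M + 1) * r) with hsdef
    have hwit : ∀ m ∈ Q', ∃ i ∈ Q, m * r ≤ i ∧ i < (m + 1) * r := by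
      intro m hm; rw [hQ'] at hm; exact hm
    choose! w hw1 hw2 hw3 using hwit
    -- t ≤ s
    have hts : t ≤ s := by
      have hcard : (Finset.range t).card ≤
          ((Finset.range ((M + 1) * r)).filter p).card := by
        apply Finset.card_le_card_of_injOn (fun j => w (Nat.nth p' j))
        · intro j hj
          rw [Finset.mem_coe, Finset.mem_range] at hj
          have hjmem : Nat.nth p' j ∈ Q' := Nat.nth_mem_of_infinite hp'inf j
          have hjM : Nat.nth p' j ≤ M := Nat.nth_monotone hp'inf (by omega)
          refine Finset.mem_filter.2 ⟨Finset.mem_range.2 ?_, hw1 _ hjmem⟩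
          calc w (Nat.nth p' j) < (Nat.nth p' j + 1) * r := hw3 _ hjmem
            _ ≤ (M + 1) * r := by
              apply Nat.mul_le_mul_right; omega
        · intro j1 hj1 j2 hj2 heq
          have h1 : Nat.nth p' j1 ∈ Q' := Nat.nth_mem_of_infinite hp'inf j1
          have h2 : Nat.nth p' j2 ∈ Q' := Nat.nth_mem_of_infinite hp'inf j2
          have e1 : w (Nat.nth p' j1) / r = Nat.nth p' j1 :=
            Nat.div_eq_of_lt_le (hw2 _ h1) (hw3 _ h1)
          have e2 : w (Nat.nth p' j2) / r = Nat.nth p' j2 :=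
            Nat.div_eq_of_lt_le (hw2 _ h2) (hw3 _ h2)
          have heqb : w (Nat.nth p' j1) = w (Nat.nth p' j2) := heq
          have heq' : Nat.nth p' j1 = Nat.nth p' j2 := by
            rw [← e1, ← e2, heqb]
          exact Nat.nth_injective hp'inf heq'
      rwa [Finset.card_range, ← Nat.count_eq_card_filter_range] at hcard
    have hs1 : 1 ≤ s := le_trans ht hts
    refine ⟨s, hts, hs1, ?_⟩
    -- bad elements of Q are at most r times the bad elements of Q'
    have hbad : ((Finset.range s).filter (fun k => ¬ Nat.nth p k ∈ A)).card
        ≤ r * ((Finset.range t).filter (fun k => Nat.nth p' k ∉ G)).card := by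
      apply Finset.card_le_mul_card_image_of_maps_to
        (f := fun k => Nat.count p' (Nat.nth p k / r))
      · intro k hk
        rw [Finset.mem_filter, Finset.mem_range] at hk
        obtain ⟨hks, hkA⟩ := hk
        have hq : Nat.nth p k ∈ Q := Nat.nth_mem_of_infinite hpinf k
        have hlt : Nat.nth p k < (M + 1) * r :=
          (Nat.lt_nth_iff_count_lt hpinf).1 (by rw [← hsdef]; exact hks)
        have hdiv : Nat.nth p k / r ∈ Q' := hmemQ' _ hq
        have hnG : Nat.nth p k / r ∉ G := fun hcon => hkA (hkey _ hq hcon)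
        have hdivM : Nat.nth p k / r ≤ M := by
          have := (Nat.div_lt_iff_lt_mul hr0).2 hlt
          omega
        have hcnt : Nat.count p' (Nat.nth p k / r) ≤ t - 1 := by
          calc Nat.count p' (Nat.nth p k / r) ≤ Nat.count p' M :=
                Nat.count_monotone p' hdivM
            _ = t - 1 := by rw [hM, Nat.count_nth_of_infinite hp'inf]
        have hnth : Nat.nth p' (Nat.count p' (Nat.nth p k / r)) = Nat.nth p k / r :=
          Nat.nth_count hdiv
        refine Finset.mem_filter.2 ⟨Finset.mem_range.2 (by omega), ?_⟩
        rw [hnth]; exact hnG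
      · intro b hb
        have hle : (Finset.filter
            (fun k => Nat.count p' (Nat.nth p k / r) = b)
            ((Finset.range s).filter (fun k => ¬ Nat.nth p k ∈ A))).card ≤
            (Finset.range r).card := by
          apply Finset.card_le_card_of_injOn
            (fun k => Nat.nth p k - Nat.nth p' b * r)
          · intro k hk
            rw [Finset.mem_coe, Finset.mem_filter, Finset.mem_filter, Finset.mem_range] at hk
            obtain ⟨⟨hks, _⟩, hkb⟩ := hk
            have hq : Nat.nth p k ∈ Q := Nat.nth_mem_of_infinite hpinf k
            have hdiv : Nat.nth p k / r ∈ Q' := hmemQ' _ hq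
            have hnth : Nat.nth p' b = Nat.nth p k / r := by
              rw [← hkb]; exact Nat.nth_count hdiv
            have h1 : Nat.nth p' b * r ≤ Nat.nth p k := by
              rw [hnth]; exact Nat.div_mul_le_self _ _
            have h2 : Nat.nth p k < Nat.nth p' b * r + r := by
              rw [hnth]
              have ha := Nat.div_add_mod (Nat.nth p k) r
              have hb2 := Nat.mod_lt (Nat.nth p k) hr0
              have hcomm : Nat.nth p k / r * r = r * (Nat.nth p k / r) :=
                Nat.mul_comm _ _
              omega
            exact Finset.mem_range.2 (show Nat.nth p k - Nat.nth p' b * r < r by omega)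
          · intro k1 hk1 k2 hk2 heq
            simp only [Finset.coe_filter, Set.mem_setOf_eq, Finset.mem_filter,
              Finset.mem_range] at hk1 hk2
            have hq1 : Nat.nth p k1 ∈ Q := Nat.nth_mem_of_infinite hpinf k1
            have hq2 : Nat.nth p k2 ∈ Q := Nat.nth_mem_of_infinite hpinf k2
            have hn1 : Nat.nth p' b = Nat.nth p k1 / r := by
              rw [← hk1.2]; exact Nat.nth_count (hmemQ' _ hq1)
            have hn2 : Nat.nth p' b = Nat.nth p k2 / r := by
              rw [← hk2.2]; exact Nat.nth_count (hmemQ' _ hq2)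
            have hge1 : Nat.nth p' b * r ≤ Nat.nth p k1 := by
              rw [hn1]; exact Nat.div_mul_le_self _ _
            have hge2 : Nat.nth p' b * r ≤ Nat.nth p k2 := by
              rw [hn2]; exact Nat.div_mul_le_self _ _
            have heqb : Nat.nth p k1 - Nat.nth p' b * r
                = Nat.nth p k2 - Nat.nth p' b * r := heq
            have : Nat.nth p k1 = Nat.nth p k2 := by omega
            exact Nat.nth_injective hpinf this
        simpa using hle
    have hsplit := Finset.card_filter_add_card_filter_not
      (s := Finset.range s) (p := fun k => Nat.nth p k ∈ A)
    rw [Finset.card_range] at hsplit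
    omega
  -- assemble: rewrite densities as limsups of finset counts
  have hudA : upperDensityWrt Q A = Filter.limsup (fun m : ℕ =>
      (((Finset.range m).filter (fun k => Nat.nth p k ∈ A)).card : ℝ) / m) Filter.atTop := by
    rw [upperDensityWrt]
    congr 1
    funext m
    rw [densAux]
  have hudG : upperDensityWrt Q' G = Filter.limsup (fun t : ℕ =>
      (((Finset.range t).filter (fun k => Nat.nth p' k ∈ G)).card : ℝ) / t) Filter.atTop := by
    rw [upperDensityWrt]
    congr 1
    funext m
    rw [densAux]
  rw [hudG] at hxG
  rw [hudA]
  set u : ℕ → ℝ := fun m =>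
    (((Finset.range m).filter (fun k => Nat.nth p k ∈ A)).card : ℝ) / m with hu
  set v : ℕ → ℝ := fun t =>
    (((Finset.range t).filter (fun k => Nat.nth p' k ∈ G)).card : ℝ) / t with hv
  have hcard_le : ∀ (m : ℕ) (P : ℕ → Prop) [DecidablePred P],
      ((Finset.range m).filter P).card ≤ m := by
    intro m P _
    calc ((Finset.range m).filter P).card ≤ (Finset.range m).card :=
          Finset.card_filter_le _ _
      _ = m := Finset.card_range m
  have hu0 : ∀ m, 0 ≤ u m := fun m => by positivity
  have hu1 : ∀ m, u m ≤ 1 := by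
    intro m
    rcases Nat.eq_zero_or_pos m with h | h
    · simp [hu, h]
    · rw [hu]
      apply div_le_one_of_le₀
      · exact_mod_cast hcard_le m _
      · positivity
  apply limsupOneAux u hu0 hu1
  intro dlt hdlt
  have hrpos : (0 : ℝ) < r := by exact_mod_cast hr0
  set γ : ℝ := dlt / r with hγdef
  have hγ : 0 < γ := div_pos hdlt hrpos
  have hcob : Filter.IsCoboundedUnder (· ≤ ·) Filter.atTop v :=
    Filter.isCoboundedUnder_le_of_le _ (fun t => by positivity)
  have hlt : (1 - γ : ℝ) < Filter.limsup v Filter.atTop := by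
    rw [hxG]; linarith
  have hfr := Filter.frequently_lt_of_lt_limsup hcob hlt
  rw [Filter.frequently_atTop] at hfr ⊢
  intro N
  obtain ⟨t, htN, htv⟩ := hfr (max N 1)
  have ht1 : 1 ≤ t := le_trans (le_max_right N 1) htN
  obtain ⟨s, hts, hs1, hcount⟩ := main t ht1
  refine ⟨s, le_trans (le_trans (le_max_left N 1) htN) hts, ?_⟩
  -- real arithmetic
  set a := ((Finset.range s).filter (fun k => Nat.nth p k ∈ A)).card with ha
  set g := ((Finset.range t).filter (fun k => Nat.nth p' k ∈ G)).card with hg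
  set b := ((Finset.range t).filter (fun k => Nat.nth p' k ∉ G)).card with hbdef
  have hgb : g + b = t := by
    have := Finset.card_filter_add_card_filter_not
      (s := Finset.range t) (p := fun k => Nat.nth p' k ∈ G)
    rw [Finset.card_range] at this
    exact this
  have ht0 : (0 : ℝ) < t := by exact_mod_cast ht1
  have hs0 : (0 : ℝ) < s := by exact_mod_cast hs1
  have hts' : (t : ℝ) ≤ s := by exact_mod_cast hts
  have hgt : (1 - γ) * t < g := by
    have := (lt_div_iff₀ ht0).1 htv
    linarith
  have hblt : (b : ℝ) < γ * t := by
    have hbt : (b : ℝ) = (t : ℝ) - g := by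
      have : (g : ℝ) + b = t := by exact_mod_cast hgb
      linarith
    nlinarith
  have hrb : (r : ℝ) * b < dlt * t := by
    have h1 : (r : ℝ) * b < r * (γ * t) := by
      exact mul_lt_mul_of_pos_left hblt hrpos
    have h2 : (r : ℝ) * (γ * t) = dlt * t := by
      rw [hγdef]; field_simp
    linarith
  have hdts : dlt * t ≤ dlt * s := by
    apply mul_le_mul_of_nonneg_left hts' (le_of_lt hdlt)
  have hcount' : (s : ℝ) ≤ a + r * b := by exact_mod_cast hcount
  show 1 - dlt ≤ u s
  rw [hu]
  show 1 - dlt ≤ (a : ℝ) / s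
  rw [le_div_iff₀ hs0]
  nlinarith
end
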